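/- arXiv:1808.10723 — 2 statements merged into one kernel-verified Lean document; each statement's English description precedes it below -/
import Mathlib

section
/- Let A and B be abelian groups. Assign to every tetrahedron t (4-element subset of the vertex set {1,2,3,4,5,6} of a 5-simplex) elements x_t, y_t ∈ A and ξ_t, η_t ∈ B, and suppose that for each of the six pentachora u_k (the 5-element subsets of {1,...,6}, where u_k omits vertex k) both colorings are permitted, i.e. 𝐲_u = ℛ𝐱_u and 𝛈_u = ℛ𝛏_u. Then the alternating sum Σ_{k=1}^{6} (−1)^k Φ_{u_k}(𝐱,𝛏) vanishes in A ⊗_ℤ B, where for a pentachoron u = ijklm (i<j<k<l<m), Φ_u(𝐱,𝛏) = (x_{jklm} − 2x_{iklm} + x_{ijlm} + x_{ijkm} − 2x_{ijkl}) ⊗ (ξ_{iklm} − ξ_{ijlm} + ξ_{ijkl}). (This is the hexagon 4-cocycle property of Φ.) -/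
/- Hexagon 4-cocycle property of the bilinear form Φ on the 5-simplex
   with vertex set `Fin 6` (vertices 1,…,6 of the paper are 0,…,5 here). -/

open TensorProduct

/-- The matrix ℛ from the paper. -/
def Rmat : Matrix (Fin 5) (Fin 5) ℤ :=
  !![0, -2, 1, 1, -2;
     0, -1, 0, 1, -1;
     -1, 2, -2, 0, 1;
     -1, 3, -2, -1, 2;
     0, 1, -1, 0, 0]

/-- The five tetrahedral faces `jklm, iklm, ijlm, ijkm, ijkl` of the
pentachoron `ijklm = abcde`. -/
def pentFaces (a b c d e : Fin 6) : Fin 5 → Finset (Fin 6) :=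
  ![{b, c, d, e}, {a, c, d, e}, {a, b, d, e}, {a, b, c, e}, {a, b, c, d}]

/-- A coloring `(x_t, y_t)` of the 3-faces of the pentachoron `abcde` is
permitted iff `𝐲_u = ℛ 𝐱_u`, the integer matrix acting on the abelian group `A`. -/
def IsPermitted {A : Type*} [AddCommGroup A] (x y : Finset (Fin 6) → A)
    (a b c d e : Fin 6) : Prop :=
  ∀ i : Fin 5,
    y (pentFaces a b c d e i) = ∑ j : Fin 5, Rmat i j • x (pentFaces a b c d e j)

/-- The hexagon 4-cocycle
`Φ_u(𝐱,𝛏) = (x_{jklm} − 2x_{iklm} + x_{ijlm} + x_{ijkm} − 2x_{ijkl}) ⊗ (ξ_{iklm} − ξ_{ijlm} + ξ_{ijkl})`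
for the pentachoron `u = ijklm = abcde`, with values in `A ⊗[ℤ] B`. -/
noncomputable def Phi {A B : Type*} [AddCommGroup A] [AddCommGroup B]
    (x : Finset (Fin 6) → A) (ξ : Finset (Fin 6) → B) (a b c d e : Fin 6) :
    A ⊗[ℤ] B :=
  (x {b, c, d, e} - 2 • x {a, c, d, e} + x {a, b, d, e} + x {a, b, c, e}
      - 2 • x {a, b, c, d}) ⊗ₜ[ℤ]
    (ξ {a, c, d, e} - ξ {a, b, d, e} + ξ {a, b, c, d})

/-! Each tetrahedron of the 5-simplex lies in exactly two pentachora, and its color `y_t` is computed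
by `ℛ` from both, so the two values of `(ℛ𝐱_u)_t` agree. Six of these gluing relations express
`x` on six tetrahedra through its values on the remaining nine, and likewise for `ξ`. After this
substitution the alternating sum of the `Φ_u` is a bilinear expression in the nine free values
of `x` and of `ξ`, and it cancels identically. -/

section
variable {A : Type*} [AddCommGroup A]

theorem isPermitted_iff (x y : Finset (Fin 6) → A) (a b c d e : Fin 6) :
    IsPermitted x y a b c d e ↔
      y {b, c, d, e} = -(2 • x {a, c, d, e}) + x {a, b, d, e} + x {a, b, c, e}
        - 2 • x {a, b, c, d} ∧
      y {a, c, d, e} = -x {a, c, d, e} + x {a, b, c, e} - x {a, b, c, d} ∧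
      y {a, b, d, e} = -x {b, c, d, e} + 2 • x {a, c, d, e} - 2 • x {a, b, d, e}
        + x {a, b, c, d} ∧
      y {a, b, c, e} = -x {b, c, d, e} + 3 • x {a, c, d, e} - 2 • x {a, b, d, e}
        - x {a, b, c, e} + 2 • x {a, b, c, d} ∧
      y {a, b, c, d} = x {a, c, d, e} - x {a, b, d, e} := by
  simp [IsPermitted, Fin.forall_fin_succ, Fin.sum_univ_five, Rmat, pentFaces, sub_eq_add_neg,
    ofNat_smul_eq_nsmul]

theorem face_values_of_isPermitted {x y : Finset (Fin 6) → A}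
    (h₁ : IsPermitted x y 1 2 3 4 5) (h₂ : IsPermitted x y 0 2 3 4 5)
    (h₃ : IsPermitted x y 0 1 3 4 5) (h₄ : IsPermitted x y 0 1 2 4 5)
    (h₆ : IsPermitted x y 0 1 2 3 4) :
    x {2, 3, 4, 5} = x {0, 2, 4, 5} - x {0, 2, 3, 4} - x {0, 1, 2, 5} + 3 • x {0, 1, 2, 4}
      - 2 • x {0, 1, 2, 3} ∧
    x {1, 3, 4, 5} = x {1, 2, 3, 5} + 3 • x {0, 2, 4, 5} - 5 • x {0, 2, 3, 4} - 2 • x {0, 1, 4, 5}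
      - x {0, 1, 3, 5} + 4 • x {0, 1, 3, 4} + 3 • x {0, 1, 2, 4} - 4 • x {0, 1, 2, 3} ∧
    x {1, 2, 4, 5} = x {1, 2, 3, 5} + 3 • x {0, 2, 4, 5} - 3 • x {0, 2, 3, 4} - 2 • x {0, 1, 4, 5}
      - x {0, 1, 3, 5} + 3 • x {0, 1, 3, 4} + 2 • x {0, 1, 2, 4} - 2 • x {0, 1, 2, 3} ∧
    x {1, 2, 3, 4} = -x {0, 2, 4, 5} + 3 • x {0, 2, 3, 4} + x {0, 1, 4, 5} - 2 • x {0, 1, 3, 4}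
      - x {0, 1, 2, 4} + 2 • x {0, 1, 2, 3} ∧
    x {0, 3, 4, 5} = x {0, 2, 4, 5} - x {0, 2, 3, 4} + x {0, 1, 2, 4} - x {0, 1, 2, 3} ∧
    x {0, 2, 3, 5} = x {0, 2, 3, 4} + x {0, 1, 3, 5} - x {0, 1, 3, 4} := by
  rw [isPermitted_iff] at h₁ h₂ h₃ h₄ h₆
  obtain ⟨y2345, y1345, y1245, -, y1234⟩ := h₁
  obtain ⟨y2345', y0345, -, -, y0234⟩ := h₂
  obtain ⟨y1345', y0345', -, -, -⟩ := h₃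
  obtain ⟨y1245', -, -, -, -⟩ := h₄
  obtain ⟨y1234', y0234', -, -, -⟩ := h₆
  have glue2345 := y2345.symm.trans y2345'
  have glue1345 := y1345.symm.trans y1345'
  have glue1245 := y1245.symm.trans y1245'
  have glue1234 := y1234.symm.trans y1234'
  have glue0345 := y0345.symm.trans y0345'
  have glue0234 := y0234.symm.trans y0234'
  refine ⟨?_, ?_, ?_, ?_, ?_, ?_⟩
  · linear_combination (norm := module) -glue2345 + glue1345 - glue1245 + glue1234 - glue0345
  · linear_combination (norm := module)
      glue2345 - 2 • glue1345 + glue1234 + glue0345 + 2 • glue0234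
  · linear_combination (norm := module) glue2345 - 2 • glue1345 + glue0345 + 2 • glue0234
  · linear_combination (norm := module) -glue2345 + glue1345 - glue1234 - glue0345
  · linear_combination (norm := module) glue0234
  · linear_combination (norm := module) glue0345

end

theorem phi_is_hexagon_cocycle_general {A B : Type*} [AddCommGroup A] [AddCommGroup B]
    (x y : Finset (Fin 6) → A) (ξ η : Finset (Fin 6) → B)
    (hx1 : IsPermitted x y 1 2 3 4 5) (hx2 : IsPermitted x y 0 2 3 4 5)
    (hx3 : IsPermitted x y 0 1 3 4 5) (hx4 : IsPermitted x y 0 1 2 4 5)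
    (hx6 : IsPermitted x y 0 1 2 3 4)
    (hξ1 : IsPermitted ξ η 1 2 3 4 5) (hξ2 : IsPermitted ξ η 0 2 3 4 5)
    (hξ3 : IsPermitted ξ η 0 1 3 4 5) (hξ4 : IsPermitted ξ η 0 1 2 4 5)
    (hξ6 : IsPermitted ξ η 0 1 2 3 4) :
    -Phi x ξ 1 2 3 4 5 + Phi x ξ 0 2 3 4 5 - Phi x ξ 0 1 3 4 5
      + Phi x ξ 0 1 2 4 5 - Phi x ξ 0 1 2 3 5 + Phi x ξ 0 1 2 3 4 = 0 := by
  obtain ⟨hx2345, hx1345, hx1245, hx1234, hx0345, hx0235⟩ :=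
    face_values_of_isPermitted hx1 hx2 hx3 hx4 hx6
  obtain ⟨-, hξ1345, hξ1245, hξ1234, hξ0345, hξ0235⟩ :=
    face_values_of_isPermitted hξ1 hξ2 hξ3 hξ4 hξ6
  simp only [Phi, hx2345, hx1345, hx1245, hx1234, hx0345, hx0235,
    hξ1345, hξ1245, hξ1234, hξ0345, hξ0235,
    tmul_add, add_tmul, tmul_sub, sub_tmul, tmul_neg, neg_tmul, smul_tmul, tmul_smul]
  module

/-- The alternating sum `Σ_{k=1}^{6} (−1)^k Φ_{u_k}(𝐱,𝛏)` over the six pentachora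
of the 5-simplex (where `u_k` omits vertex `k`) vanishes, provided both colorings
`(x,y)` and `(ξ,η)` are permitted on all six pentachora. -/
theorem phi_is_hexagon_cocycle {A B : Type*} [AddCommGroup A] [AddCommGroup B]
    (x y : Finset (Fin 6) → A) (ξ η : Finset (Fin 6) → B)
    (hx1 : IsPermitted x y 1 2 3 4 5) (hx2 : IsPermitted x y 0 2 3 4 5)
    (hx3 : IsPermitted x y 0 1 3 4 5) (hx4 : IsPermitted x y 0 1 2 4 5)
    (hx5 : IsPermitted x y 0 1 2 3 5) (hx6 : IsPermitted x y 0 1 2 3 4)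
    (hξ1 : IsPermitted ξ η 1 2 3 4 5) (hξ2 : IsPermitted ξ η 0 2 3 4 5)
    (hξ3 : IsPermitted ξ η 0 1 3 4 5) (hξ4 : IsPermitted ξ η 0 1 2 4 5)
    (hξ5 : IsPermitted ξ η 0 1 2 3 5) (hξ6 : IsPermitted ξ η 0 1 2 3 4) :
    -Phi x ξ 1 2 3 4 5 + Phi x ξ 0 2 3 4 5 - Phi x ξ 0 1 3 4 5
      + Phi x ξ 0 1 2 4 5 - Phi x ξ 0 1 2 3 5 + Phi x ξ 0 1 2 3 4 = 0 :=
  phi_is_hexagon_cocycle_general x y ξ η hx1 hx2 hx3 hx4 hx6 hξ1 hξ2 hξ3 hξ4 hξ6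
end

section
/- The bilinear hexagon 4-cocycle Φ is cohomologically nontrivial over ℤ: there is no function c : ℤ × ℤ × ℤ × ℤ → ℤ such that for every permitted double coloring of the single pentachoron u = 12345 (i.e. for all x_t, y_t, ξ_t, η_t ∈ ℤ assigned to the five tetrahedra t of u with 𝐲_u = ℛ𝐱_u and 𝛈_u = ℛ𝛏_u) one has Φ_u(𝐱,𝛏) = Σ_{k=1}^{5} (−1)^{k+1} c(x_{t_k}, y_{t_k}, ξ_{t_k}, η_{t_k}), where (t_1,...,t_5) = (2345, 1345, 1245, 1235, 1234) and Φ_u(𝐱,𝛏) = (x_{2345} − 2x_{1345} + x_{1245} + x_{1235} − 2x_{1234})·(ξ_{1345} − ξ_{1245} + ξ_{1234}). -/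
/-- The bilinear hexagon 4-cocycle Φ is cohomologically nontrivial over ℤ:
there is no 3-cochain `c`, a function of the permitted coloring
`(x_t, y_t, ξ_t, η_t)` of a single tetrahedron, whose coboundary — the
alternating sum over the five 3-faces `(t_1,…,t_5) = (2345,1345,1245,1235,1234)`
of the pentachoron `u = 12345` (indexed here by `Fin 5`) — equals
`Φ_u(𝐱,𝛏) = (x_{2345} − 2x_{1345} + x_{1245} + x_{1235} − 2x_{1234}) ·
(ξ_{1345} − ξ_{1245} + ξ_{1234})` for every permitted double coloring,
i.e. for all `x, ξ : Fin 5 → ℤ`, with `y = ℛx` and `η = ℛξ`. -/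
theorem phi_not_a_coboundary :
    ¬ ∃ c : ℤ × ℤ × ℤ × ℤ → ℤ,
      ∀ x ξ : Fin 5 → ℤ,
        (x 0 - 2 * x 1 + x 2 + x 3 - 2 * x 4) * (ξ 1 - ξ 2 + ξ 4) =
          ∑ k : Fin 5, (-1 : ℤ) ^ (k : ℕ) *
            c (x k, Rmat.mulVec x k, ξ k, Rmat.mulVec ξ k) := by
  rintro ⟨c, hc⟩
  have h₀ : c (0, 0, 0, 0) - c (0, 0, 0, 0) + c (1, -1, 1, -1) - c (1, -1, 1, -1)
      + c (1, -1, 1, -1) = 0 := by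
    simpa [Fin.sum_univ_five, Rmat, Matrix.mulVec, dotProduct, sub_eq_add_neg] using
      (hc ![0, 0, 1, 1, 1] ![0, 0, 1, 1, 1]).symm
  have h₁ : c (-1, 0, -1, 0) - c (0, -1, 0, -1) + c (1, -1, 1, -1) - c (-1, 0, -1, 0)
      + c (0, -1, 0, -1) = 1 := by
    simpa [Fin.sum_univ_five, Rmat, Matrix.mulVec, dotProduct, sub_eq_add_neg] using
      (hc ![-1, 0, 1, -1, 0] ![-1, 0, 1, -1, 0]).symm
  linarith
end
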